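/- Let ε# = ln( (7 + 4√7 + 2√(20 + 14√7)) / 9 ). Then the worst-case variances of the Piecewise Mechanism and Duchi et al.'s one-dimensional mechanism compare as follows: 4e^{ε/2}/(3(e^{ε/2}−1)²) < ((e^ε+1)/(e^ε−1))² for all ε > ε#, 4e^{ε#/2}/(3(e^{ε#/2}−1)²) = ((e^{ε#}+1)/(e^{ε#}−1))², and 4e^{ε/2}/(3(e^{ε/2}−1)²) > ((e^ε+1)/(e^ε−1))² for all 0 < ε < ε#. -/
import Mathlib

open Real

/-- `ε# = ln((7 + 4√7 + 2√(20 + 14√7)) / 9)`. -/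
noncomputable def epsSharp : ℝ :=
  Real.log ((7 + 4 * Real.sqrt 7 + 2 * Real.sqrt (20 + 14 * Real.sqrt 7)) / 9)

private lemma aux_key (t x : ℝ) (ht : t ^ 2 = 7) :
    (3 * x ^ 2 - (2 + 2 * t) * x + 3) * (3 * x ^ 2 - (2 - 2 * t) * x + 3) =
      3 * (3 * x ^ 4 - 4 * x ^ 3 - 2 * x ^ 2 - 4 * x + 3) := by
  linear_combination (-4 * x ^ 2) * ht

private lemma aux_lt (t x xs : ℝ) (ht : t ^ 2 = 7) (ht0 : 0 ≤ t) (hx : 1 < x) (hxs : 1 < xs)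
    (hrel : 3 * xs ^ 2 + 3 = (2 + 2 * t) * xs) (h : xs < x) :
    4 * x / (3 * (x - 1) ^ 2) < ((x ^ 2 + 1) / (x ^ 2 - 1)) ^ 2 := by
  have ht2 : 2 < t := by nlinarith
  have hd1 : (0:ℝ) < 3 * (x - 1) ^ 2 := by nlinarith
  have hd2 : (0:ℝ) < (x ^ 2 - 1) ^ 2 := by nlinarith
  rw [div_pow, div_lt_div_iff₀ hd1 hd2]
  have hq1 : 0 < 3 * x ^ 2 - (2 + 2 * t) * x + 3 := by
    nlinarith [mul_pos (sub_pos.2 h) (sub_pos.2 (show (1:ℝ) < x * xs by nlinarith))]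
  have hq2 : 0 < 3 * x ^ 2 - (2 - 2 * t) * x + 3 := by nlinarith
  have hf : 0 < 3 * x ^ 4 - 4 * x ^ 3 - 2 * x ^ 2 - 4 * x + 3 := by
    nlinarith [mul_pos hq1 hq2, aux_key t x ht]
  nlinarith [mul_pos hf (pow_pos (sub_pos.2 hx) 2)]

private lemma aux_gt (t x xs : ℝ) (ht : t ^ 2 = 7) (ht0 : 0 ≤ t) (hx : 1 < x) (hxs : 1 < xs)
    (hrel : 3 * xs ^ 2 + 3 = (2 + 2 * t) * xs) (h : x < xs) :
    ((x ^ 2 + 1) / (x ^ 2 - 1)) ^ 2 < 4 * x / (3 * (x - 1) ^ 2) := by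
  have ht2 : 2 < t := by nlinarith
  have hd1 : (0:ℝ) < 3 * (x - 1) ^ 2 := by nlinarith
  have hd2 : (0:ℝ) < (x ^ 2 - 1) ^ 2 := by nlinarith
  rw [div_pow, div_lt_div_iff₀ hd2 hd1]
  have hq1 : 3 * x ^ 2 - (2 + 2 * t) * x + 3 < 0 := by
    nlinarith [mul_pos (sub_pos.2 h) (sub_pos.2 (show (1:ℝ) < x * xs by nlinarith))]
  have hq2 : 0 < 3 * x ^ 2 - (2 - 2 * t) * x + 3 := by nlinarith
  have hf : 3 * x ^ 4 - 4 * x ^ 3 - 2 * x ^ 2 - 4 * x + 3 < 0 := by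
    nlinarith [mul_neg_of_neg_of_pos hq1 hq2, aux_key t x ht]
  nlinarith [mul_pos (neg_pos.2 hf) (pow_pos (sub_pos.2 hx) 2)]

private lemma aux_eq (t xs : ℝ) (ht : t ^ 2 = 7) (hxs : 1 < xs)
    (hrel : 3 * xs ^ 2 + 3 = (2 + 2 * t) * xs) :
    4 * xs / (3 * (xs - 1) ^ 2) = ((xs ^ 2 + 1) / (xs ^ 2 - 1)) ^ 2 := by
  have hd1 : (3 * (xs - 1) ^ 2) ≠ 0 := by nlinarith
  have hd2 : ((xs ^ 2 - 1) ^ 2) ≠ 0 := by nlinarith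
  rw [div_pow, div_eq_div_iff hd1 hd2]
  linear_combination (-(xs - 1) ^ 2 * (3 * xs ^ 2 - (2 - 2 * t) * xs + 3) / 3) * hrel
    + (-4 * xs ^ 2 * (xs - 1) ^ 2 / 3) * ht

/-- Comparison of the worst-case variances of the Piecewise Mechanism and Duchi et al.'s
one-dimensional mechanism: PM's is smaller for `ε > ε#`, they are equal at `ε#`,
and PM's is larger for `0 < ε < ε#`. -/
theorem stmt_14 :
    (∀ ε : ℝ, epsSharp < ε →
      4 * exp (ε / 2) / (3 * (exp (ε / 2) - 1) ^ 2) < ((exp ε + 1) / (exp ε - 1)) ^ 2) ∧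
    4 * exp (epsSharp / 2) / (3 * (exp (epsSharp / 2) - 1) ^ 2) =
      ((exp epsSharp + 1) / (exp epsSharp - 1)) ^ 2 ∧
    (∀ ε : ℝ, 0 < ε → ε < epsSharp →
      ((exp ε + 1) / (exp ε - 1)) ^ 2 < 4 * exp (ε / 2) / (3 * (exp (ε / 2) - 1) ^ 2)) := by
  set t := Real.sqrt 7 with htdef
  have ht : t ^ 2 = 7 := Real.sq_sqrt (by norm_num)
  have ht0 : 0 ≤ t := Real.sqrt_nonneg 7
  have ht2 : 2 < t := by nlinarith
  set u := Real.sqrt (2 * t - 1) with hudef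
  have hu : u ^ 2 = 2 * t - 1 := Real.sq_sqrt (by linarith)
  have hu0 : 0 ≤ u := Real.sqrt_nonneg _
  have hu1 : 1 < u := by nlinarith
  have hsq : Real.sqrt (20 + 14 * t) = (1 + t) * u := by
    rw [show (20:ℝ) + 14 * t = ((1 + t) * u) ^ 2 by
        linear_combination (-(2 * t + 3)) * ht + (-(1 + t) ^ 2) * hu,
      Real.sqrt_sq (by positivity)]
  set xs := (1 + t + u) / 3 with hxsdef
  have hxs : 1 < xs := by rw [hxsdef]; nlinarith
  have hrel : 3 * xs ^ 2 + 3 = (2 + 2 * t) * xs := by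
    rw [hxsdef]; linear_combination (-(1:ℝ)/3) * ht + ((1:ℝ)/3) * hu
  have hA : (7 + 4 * t + 2 * Real.sqrt (20 + 14 * t)) / 9 = xs ^ 2 := by
    rw [hsq, hxsdef]; linear_combination (-(1:ℝ)/9) * ht + (-(1:ℝ)/9) * hu
  have hAexp : exp epsSharp = xs ^ 2 := by
    rw [epsSharp, ← htdef, hA, Real.exp_log (by positivity)]
  have hhalf : exp (epsSharp / 2) = xs := by
    have h1 : exp (epsSharp / 2) ^ 2 = xs ^ 2 := by
      rw [sq, ← Real.exp_add, show epsSharp / 2 + epsSharp / 2 = epsSharp by ring, hAexp]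
    have h2 := Real.exp_pos (epsSharp / 2)
    nlinarith [sq_nonneg (exp (epsSharp / 2) - xs), sq_nonneg (exp (epsSharp / 2) + xs)]
  have hexpsq : ∀ ε : ℝ, exp ε = exp (ε / 2) ^ 2 := by
    intro ε
    rw [sq, ← Real.exp_add]
    congr 1
    ring
  refine ⟨fun ε hε => ?_, ?_, fun ε hε0 hε => ?_⟩
  · rw [hexpsq ε]
    have hx : xs < exp (ε / 2) := by
      rw [← hhalf]; exact Real.exp_lt_exp.2 (by linarith)
    exact aux_lt t _ xs ht ht0 (by linarith) hxs hrel hx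
  · rw [hexpsq epsSharp, hhalf]
    exact aux_eq t xs ht hxs hrel
  · rw [hexpsq ε]
    have hx1 : 1 < exp (ε / 2) := by
      rw [show (1:ℝ) = exp 0 by simp]; exact Real.exp_lt_exp.2 (by linarith)
    have hx : exp (ε / 2) < xs := by
      rw [← hhalf]; exact Real.exp_lt_exp.2 (by linarith)
    exact aux_gt t _ xs ht ht0 hx1 hxs hrel hx
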